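/- Let T: 𝕋 → 𝕋 be continuous with finite fibers, X ⊂ 𝕋 an infinite rotational proper subset with 0 ∉ X, α = inf X, β = sup X, α' = max{x ∈ X : Tx = β}, β' = min{x ∈ X : Tx = α}. Then T|_X is monotone increasing on X ∩ [α, α'] and on X ∩ [β', β]; moreover T(x) > x for all x ∈ X ∩ [α, α'] and T(x) < x for all x ∈ X ∩ [β', β]. -/

import Mathlib

open Set Filter MeasureTheory

noncomputable def rep (z : UnitAddCircle) : ℝ := (AddCircle.equivIco 1 0 z : ℝ)

def MinimalOn (T : UnitAddCircle → UnitAddCircle) (X : Set UnitAddCircle) : Prop :=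
  ∀ x ∈ X, ∀ y ∈ X, y ∈ closure {z : UnitAddCircle | ∃ n : ℕ, T^[n] x = z}

def PreservesCyclicOrder (T : UnitAddCircle → UnitAddCircle) (X : Set UnitAddCircle) : Prop :=
  ∀ p ∈ X, ∀ q ∈ X, ∀ r ∈ X,
    T p ≠ T q → T q ≠ T r → T r ≠ T p →
    sbtw p q r → sbtw (T p) (T q) (T r)

def IsRotational (T : UnitAddCircle → UnitAddCircle) (X : Set UnitAddCircle) : Prop :=
  IsClosed X ∧ Set.MapsTo T X X ∧ MinimalOn T X ∧ PreservesCyclicOrder T X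

/-!
Everything is lifted to the fundamental domain `[0, 1)`, where the cyclic order of three points
becomes the real relation `CyclicLT`. Suppose `r < s ≤ α'` but `T s < T r`. If `T r < β`, then
`r, s, α'` are mapped to `T r, T s, β` in the wrong cyclic order. If `T r = β`, cyclic order forces
every point of `X` to the right of `α'` into the two fibres over `β` and `T s`; this is impossible
because fibres are finite while `β` is not isolated in `X` (a minimal infinite set has no periodic
points). Once `T` is monotone on `[α, α']`, a point `r` there with `T r < r` would make
`X ∩ [α, r]` invariant, hence equal to `X` by minimality, which contradicts `β ∈ X`. The edge
`[β', β]` is the mirror image under `r ↦ -r`.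
-/

open Function

def CyclicLT (a b c : ℝ) : Prop := (a < b ∧ b < c) ∨ (b < c ∧ c < a) ∨ (c < a ∧ a < b)

lemma cyclicLT_neg_iff {a b c : ℝ} : CyclicLT (-a) (-b) (-c) ↔ CyclicLT c b a := by
  simp only [CyclicLT, neg_lt_neg_iff]
  tauto

lemma CyclicLT.or_swap {a b c : ℝ} (hab : a ≠ b) (hbc : b ≠ c) (hca : c ≠ a) :
    CyclicLT a b c ∨ CyclicLT c b a := by
  unfold CyclicLT
  rcases hab.lt_or_gt with h₁ | h₁ <;> rcases hbc.lt_or_gt with h₂ | h₂ <;>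
    rcases hca.lt_or_gt with h₃ | h₃ <;> first | (exfalso; linarith) | tauto

lemma coe_rep (z : UnitAddCircle) : ((rep z : ℝ) : UnitAddCircle) = z :=
  AddCircle.coe_equivIco

lemma rep_mem_Ico (z : UnitAddCircle) : rep z ∈ Ico (0 : ℝ) 1 := by
  simpa [rep] using (AddCircle.equivIco 1 0 z).2

lemma rep_coe_of_mem {r : ℝ} (hr : r ∈ Ico (0 : ℝ) 1) : rep r = r :=
  AddCircle.equivIco_coe_of_mem (by simpa using hr)

lemma coe_injOn_Ico : InjOn ((↑) : ℝ → UnitAddCircle) (Ico 0 1) := fun r hr s hs h =>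
  (AddCircle.coe_eq_coe_iff_of_mem_Ico (p := 1) (a := 0) (by simpa using hr)
    (by simpa using hs)).1 h

lemma sbtw_coe_of_lt_of_lt {a b c : ℝ} (ha : 0 ≤ a) (hab : a < b) (hbc : b < c) (hc : c < 1) :
    sbtw (a : UnitAddCircle) b c := by
  rw [sbtw_iff_not_btw, QuotientAddGroup.btw_coe_iff, ← toIcoMod_add_right,
    ← toIocMod_add_right, (toIcoMod_eq_self _).2 ⟨by linarith, by linarith⟩,
    (toIocMod_eq_self _).2 ⟨by linarith, by linarith⟩]
  linarith

lemma sbtw_coe_iff_cyclicLT {a b c : ℝ} (ha : a ∈ Ico (0 : ℝ) 1) (hb : b ∈ Ico (0 : ℝ) 1)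
    (hc : c ∈ Ico (0 : ℝ) 1) : sbtw (a : UnitAddCircle) b c ↔ CyclicLT a b c := by
  have of_cyclicLT : ∀ {a b c : ℝ}, a ∈ Ico (0 : ℝ) 1 → b ∈ Ico (0 : ℝ) 1 → c ∈ Ico (0 : ℝ) 1 →
      CyclicLT a b c → sbtw (a : UnitAddCircle) b c := by
    rintro a b c ⟨ha, ha'⟩ ⟨hb, hb'⟩ ⟨hc, hc'⟩ (⟨h₁, h₂⟩ | ⟨h₁, h₂⟩ | ⟨h₁, h₂⟩)
    · exact sbtw_coe_of_lt_of_lt ha h₁ h₂ hc'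
    · exact sbtw_cyclic_right (sbtw_coe_of_lt_of_lt hb h₁ h₂ ha')
    · exact sbtw_cyclic_left (sbtw_coe_of_lt_of_lt hc h₁ h₂ hb')
  refine ⟨fun h => ?_, of_cyclicLT ha hb hc⟩
  have hab : a ≠ b := by rintro rfl; exact sbtw_irrefl_left h
  have hbc : b ≠ c := by rintro rfl; exact sbtw_irrefl_right h
  have hca : c ≠ a := by rintro rfl; exact sbtw_irrefl_left_right h
  exact (CyclicLT.or_swap hab hbc hca).resolve_right
    fun h' => sbtw_asymm h (of_cyclicLT hc hb ha h')

lemma IsLeast.isGreatest_neg {G : Type*} [AddCommGroup G] [PartialOrder G] [IsOrderedAddMonoid G]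
    {s : Set G} {a : G} (h : IsLeast s a) : IsGreatest (-s) (-a) :=
  ⟨by simpa using h.1, fun _ hr => le_neg_of_le_neg (h.2 hr)⟩

/-- The picture of a rotational set in the fundamental domain `[0, 1)`: `K` plays the role of
the lift of `X` and `f` that of `rep ∘ T ∘ (↑)`. -/
structure IsRotationalLift (f : ℝ → ℝ) (K : Set ℝ) : Prop where
  isClosed : IsClosed K
  infinite : K.Infinite
  mapsTo : MapsTo f K K
  minimal : ∀ x ∈ K, ∀ y ∈ K, y ∈ closure (range fun n => f^[n] x)
  cyclicLT : ∀ a ∈ K, ∀ b ∈ K, ∀ c ∈ K, CyclicLT a b c →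
    f a ≠ f b → f b ≠ f c → f c ≠ f a → CyclicLT (f a) (f b) (f c)
  finite_fiber : ∀ y, {r ∈ K | f r = y}.Finite

namespace IsRotationalLift

variable {f : ℝ → ℝ} {K : Set ℝ} (hK : IsRotationalLift f K)
include hK

lemma iterate_ne_self {x : ℝ} (hx : x ∈ K) {n : ℕ} (hn : 0 < n) : f^[n] x ≠ x := by
  intro hper
  have horbit : (range fun m => f^[m] x).Finite := by
    refine ((finite_Iio n).image fun m => f^[m] x).subset ?_
    rintro _ ⟨m, rfl⟩
    exact ⟨m % n, Nat.mod_lt m hn, IsPeriodicPt.iterate_mod_apply hper m⟩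
  refine hK.infinite (horbit.subset fun y hy => ?_)
  simpa [horbit.isClosed.closure_eq] using hK.minimal x hx y hy

lemma apply_ne_self {x : ℝ} (hx : x ∈ K) : f x ≠ x := by
  simpa using hK.iterate_ne_self hx one_pos

lemma preperfect : Preperfect K := by
  refine preperfect_iff_nhds.2 fun x hx U hU => ?_
  obtain ⟨_, hyU, n, rfl⟩ :=
    mem_closure_iff_nhds.1 (hK.minimal (f x) (hK.mapsTo hx) x hx) U hU
  refine ⟨f^[n] (f x), ⟨hyU, hK.mapsTo.iterate n (hK.mapsTo hx)⟩, ?_⟩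
  rw [← iterate_succ_apply]
  exact hK.iterate_ne_self hx n.succ_pos

lemma infinite_inter_Ioi {a b : ℝ} (hb : b ∈ K) (hab : a < b) : (Ioi a ∩ K).Infinite :=
  Set.Infinite.of_accPt ((hK.preperfect b hb).nhds_inter (Ioi_mem_nhds hab))

lemma subset_of_mapsTo {C : Set ℝ} (hC : IsClosed C) {x : ℝ} (hx : x ∈ K) (hxC : x ∈ C)
    (hmaps : MapsTo f (K ∩ C) C) : K ⊆ C := by
  have hinv : MapsTo f (K ∩ C) (K ∩ C) := fun y hy => ⟨hK.mapsTo hy.1, hmaps hy⟩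
  intro y hy
  refine closure_minimal ?_ hC (hK.minimal x hx y hy)
  rintro _ ⟨n, rfl⟩
  exact (hinv.iterate n ⟨hx, hxC⟩).2

section LeftEdge

variable {a β : ℝ} (hβ : IsGreatest K β) (ha : a ∈ K) (hfa : f a = β)
include hβ ha hfa

lemma lt_of_apply_eq_max : a < β :=
  (hβ.2 ha).lt_of_ne fun h => hK.apply_ne_self ha (hfa.trans h.symm)

lemma apply_eq_max_of_apply_eq_max {r s : ℝ} (hr : r ∈ K) (hs : s ∈ K) (hrs : r < s)
    (hsa : s < a) (hfr : f r = β) : f s = β := by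
  by_contra hfs
  have hfs' : f s < β := (hβ.2 (hK.mapsTo hs)).lt_of_ne hfs
  have hright : Ioi a ∩ K ⊆ {t ∈ K | f t = β} ∪ {t ∈ K | f t = f s} := by
    rintro t ⟨hat, ht⟩
    obtain hft | hft := (hβ.2 (hK.mapsTo ht)).eq_or_lt
    · exact Or.inl ⟨ht, hft⟩
    refine Or.inr ⟨ht, by_contra fun hft' : f t ≠ f s => ?_⟩
    have h₁ := hK.cyclicLT r hr s hs t ht (Or.inl ⟨hrs, hsa.trans hat⟩)
      (by rw [hfr]; exact hfs'.ne') hft'.symm (by rw [hfr]; exact hft.ne)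
    have h₂ := hK.cyclicLT s hs a ha t ht (Or.inl ⟨hsa, hat⟩)
      (by rw [hfa]; exact hfs'.ne) (by rw [hfa]; exact hft.ne') hft'
    rw [hfr] at h₁
    rw [hfa] at h₂
    rcases h₁ with ⟨_, _⟩ | ⟨_, _⟩ | ⟨_, _⟩ <;> rcases h₂ with ⟨_, _⟩ | ⟨_, _⟩ | ⟨_, _⟩ <;>
      linarith
  exact hK.infinite_inter_Ioi hβ.1 (hK.lt_of_apply_eq_max hβ ha hfa)
    (((hK.finite_fiber β).union (hK.finite_fiber (f s))).subset hright)

lemma monotoneOn_of_apply_eq_max : MonotoneOn f (K ∩ Iic a) := by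
  rintro r ⟨hr, -⟩ s ⟨hs, hsa⟩ hrs
  by_contra! hlt
  obtain rfl | hrs := hrs.eq_or_lt
  · exact lt_irrefl _ hlt
  have hsa : s < a := hsa.lt_of_ne fun h => by
    subst h
    exact (hβ.2 (hK.mapsTo hr)).not_gt (hfa ▸ hlt)
  obtain hfr | hfr := (hβ.2 (hK.mapsTo hr)).eq_or_lt
  · exact hlt.ne (by rw [hfr, hK.apply_eq_max_of_apply_eq_max hβ ha hfa hr hs hrs hsa hfr])
  have h := hK.cyclicLT r hr s hs a ha (Or.inl ⟨hrs, hsa⟩) hlt.ne' (by rw [hfa]; linarith)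
    (by rw [hfa]; exact hfr.ne')
  rw [hfa] at h
  rcases h with ⟨_, _⟩ | ⟨_, _⟩ | ⟨_, _⟩ <;> linarith

lemma lt_apply_of_le_of_apply_eq_max {r : ℝ} (hr : r ∈ K) (hra : r ≤ a) : r < f r := by
  refine (hK.apply_ne_self hr).symm.lt_of_le (not_lt.1 fun hfr => ?_)
  have hmaps : MapsTo f (K ∩ Iic r) (Iic r) := fun s hs =>
    ((hK.monotoneOn_of_apply_eq_max hβ ha hfa ⟨hs.1, hs.2.trans hra⟩ ⟨hr, hra⟩ hs.2).trans
      hfr.le)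
  have hβr : β ≤ r := hK.subset_of_mapsTo isClosed_Iic hr self_mem_Iic hmaps hβ.1
  linarith [hK.lt_of_apply_eq_max hβ ha hfa]

end LeftEdge

lemma neg : IsRotationalLift (fun r => -f (-r)) (-K) where
  isClosed := hK.isClosed.neg
  infinite := Set.infinite_neg.2 hK.infinite
  mapsTo r hr := by simpa using hK.mapsTo hr
  minimal x hx y hy := by
    have hconj : Semiconj Neg.neg f fun r => -f (-r) := fun r => by simp
    simpa using map_mem_closure continuous_neg (hK.minimal (-x) hx (-y) hy)
      (by rintro _ ⟨n, rfl⟩; exact ⟨n, by simpa using (hconj.iterate_right n (-x)).symm⟩)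
  cyclicLT a ha b hb c hc h hab hbc hca := by
    rw [cyclicLT_neg_iff]
    exact hK.cyclicLT (-c) hc (-b) hb (-a) ha (by rwa [cyclicLT_neg_iff])
      (fun e => hbc (by rw [e])) (fun e => hab (by rw [e])) (fun e => hca (by rw [e]))
  finite_fiber y := ((hK.finite_fiber (-y)).preimage neg_injective.injOn).subset
    fun r ⟨hr, hfr⟩ => ⟨hr, by simp [← hfr]⟩

section RightEdge

variable {b α : ℝ} (hα : IsLeast K α) (hb : b ∈ K) (hfb : f b = α)
include hα hb hfb

lemma monotoneOn_of_apply_eq_min : MonotoneOn f (K ∩ Ici b) := by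
  rintro r ⟨hr, hbr⟩ s ⟨hs, hbs⟩ hrs
  simpa using hK.neg.monotoneOn_of_apply_eq_max hα.isGreatest_neg
    (show -b ∈ -K by simpa using hb) (by simp [hfb])
    ⟨by simpa using hs, (neg_le_neg hbs : -s ≤ -b)⟩ ⟨by simpa using hr, (neg_le_neg hbr : -r ≤ -b)⟩ (neg_le_neg hrs)

lemma apply_lt_of_le_of_apply_eq_min {r : ℝ} (hr : r ∈ K) (hbr : b ≤ r) : f r < r := by
  simpa using hK.neg.lt_apply_of_le_of_apply_eq_max hα.isGreatest_neg
    (show -b ∈ -K by simpa using hb) (by simp [hfb]) (show -r ∈ -K by simpa using hr)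
    (neg_le_neg hbr)

end RightEdge

end IsRotationalLift

def liftSet (X : Set UnitAddCircle) : Set ℝ := {r | r ∈ Ico (0 : ℝ) 1 ∧ (r : UnitAddCircle) ∈ X}

lemma liftSet_subset_Ico (X : Set UnitAddCircle) : liftSet X ⊆ Ico 0 1 := fun _ hr => hr.1

lemma isCompact_liftSet {X : Set UnitAddCircle} (hX : IsClosed X) (h0 : (0 : UnitAddCircle) ∉ X) :
    IsCompact (liftSet X) := by
  have h : liftSet X = Icc 0 1 ∩ (↑) ⁻¹' X := by
    ext r
    refine ⟨fun hr => ⟨Ico_subset_Icc_self hr.1, hr.2⟩, fun ⟨hr, hrX⟩ => ⟨⟨hr.1, ?_⟩, hrX⟩⟩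
    refine hr.2.lt_of_ne fun h => h0 ?_
    rwa [mem_preimage, h, AddCircle.coe_period] at hrX
  rw [h]
  exact isCompact_Icc.inter_right (hX.preimage (AddCircle.continuous_mk' 1))

lemma finite_fiber_liftSet {T : UnitAddCircle → UnitAddCircle}
    (hfib : ∀ y : UnitAddCircle, (T ⁻¹' {y}).Finite) (X : Set UnitAddCircle) (z : UnitAddCircle) :
    {r ∈ liftSet X | T r = z}.Finite :=
  Finite.of_finite_image ((hfib z).subset (by rintro _ ⟨r, ⟨-, hr⟩, rfl⟩; exact hr))
    (coe_injOn_Ico.mono fun _ hr => hr.1.1)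

lemma IsRotational.surjOn {T : UnitAddCircle → UnitAddCircle} {X : Set UnitAddCircle}
    (hT : Continuous T) (hrot : IsRotational T X) (hX : X.Nontrivial) : SurjOn T X X := by
  intro y hy
  obtain ⟨x, hx, hxy⟩ := hX.exists_ne y
  have horbit : {z | ∃ n, T^[n] x = z} ⊆ {x} ∪ T '' X := by
    rintro _ ⟨_ | n, rfl⟩
    · exact Or.inl rfl
    · exact Or.inr ⟨T^[n] x, hrot.2.1.iterate n hx, (iterate_succ_apply' T n x).symm⟩
  have hclosed : IsClosed ({x} ∪ T '' X) :=
    isClosed_singleton.union (hrot.1.isCompact.image hT).isClosed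
  obtain h | h := closure_minimal horbit hclosed (hrot.2.2.1 x hx y hy)
  · exact absurd h.symm hxy
  · exact h

lemma mem_closure_of_coe_mem_closure {K s : Set ℝ} (hK : IsCompact K) (hKI : K ⊆ Ico 0 1)
    (hs : s ⊆ K) {y : ℝ} (hy : y ∈ K) (h : (y : UnitAddCircle) ∈ closure ((↑) '' s)) :
    y ∈ closure s := by
  have hsK : closure s ⊆ K := closure_minimal hs hK.isClosed
  have hcl : IsClosed (((↑) : ℝ → UnitAddCircle) '' closure s) :=
    ((hK.of_isClosed_subset isClosed_closure hsK).image (AddCircle.continuous_mk' 1)).isClosed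
  obtain ⟨v, hv, hvy⟩ := closure_minimal (image_mono subset_closure) hcl h
  rwa [← coe_injOn_Ico (hKI (hsK hv)) (hKI hy) hvy]

lemma isRotationalLift_of_isRotational {T : UnitAddCircle → UnitAddCircle}
    (hfib : ∀ y : UnitAddCircle, (T ⁻¹' {y}).Finite) {X : Set UnitAddCircle}
    (hrot : IsRotational T X) (hinf : X.Infinite) (h0 : (0 : UnitAddCircle) ∉ X) :
    IsRotationalLift (fun r : ℝ => rep (T r)) (liftSet X) := by
  obtain ⟨hXc, hmaps, hmin, hcyc⟩ := hrot
  have hK := isCompact_liftSet hXc h0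
  have hconj : Semiconj ((↑) : ℝ → UnitAddCircle) (fun r : ℝ => rep (T r)) T :=
    fun r => coe_rep _
  have hmapsK : MapsTo (fun r : ℝ => rep (T r)) (liftSet X) (liftSet X) := fun r hr =>
    ⟨rep_mem_Ico _, by simpa [coe_rep] using hmaps hr.2⟩
  refine ⟨hK.isClosed, fun hfin => hinf ((hfin.image (↑)).subset fun x hx =>
      ⟨rep x, ⟨rep_mem_Ico x, by rwa [coe_rep]⟩, coe_rep x⟩), hmapsK, ?_, ?_, ?_⟩
  · intro x hx y hy
    refine mem_closure_of_coe_mem_closure hK (liftSet_subset_Ico X) ?_ hy ?_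
    · rintro _ ⟨n, rfl⟩
      exact hmapsK.iterate n hx
    · convert hmin x hx.2 y hy.2 using 2
      ext z
      simp only [mem_image, mem_range, exists_exists_eq_and, mem_ofPred_eq,
        (hconj.iterate_right _).eq]
  · intro a ha b hb c hc h hab hbc hca
    have hT : ∀ {u v : ℝ}, rep (T u) ≠ rep (T v) → T u ≠ T v := fun huv e => huv (by rw [e])
    have := hcyc _ ha.2 _ hb.2 _ hc.2 (hT hab) (hT hbc) (hT hca)
      ((sbtw_coe_iff_cyclicLT ha.1 hb.1 hc.1).2 h)
    rwa [← coe_rep (T a), ← coe_rep (T b), ← coe_rep (T c),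
      sbtw_coe_iff_cyclicLT (rep_mem_Ico _) (rep_mem_Ico _) (rep_mem_Ico _)] at this
  · intro y
    refine (finite_fiber_liftSet hfib X y).subset fun r ⟨hr, hry⟩ => ⟨hr, ?_⟩
    rw [← coe_rep (T r)]
    exact congrArg _ hry

theorem monotone_on_edges_general
    (T : UnitAddCircle → UnitAddCircle) (hT : Continuous T)
    (hfib : ∀ y : UnitAddCircle, (T ⁻¹' {y}).Finite)
    (X : Set UnitAddCircle) (hrot : IsRotational T X)
    (hinf : X.Infinite)
    (h0 : (0 : UnitAddCircle) ∉ X)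
    (Xr : Set ℝ)
    (hXr : Xr = {r : ℝ | r ∈ Set.Ico (0:ℝ) 1 ∧ ((r : ℝ) : UnitAddCircle) ∈ X})
    (α β : ℝ) (hα : α = sInf Xr) (hβ : β = sSup Xr)
    (α' β' : ℝ)
    (hα' : α' = sSup {r ∈ Xr | T ((r : ℝ) : UnitAddCircle) = ((β : ℝ) : UnitAddCircle)})
    (hβ' : β' = sInf {r ∈ Xr | T ((r : ℝ) : UnitAddCircle) = ((α : ℝ) : UnitAddCircle)}) :
    (∀ r ∈ Xr, ∀ s ∈ Xr, α ≤ r → r ≤ s → s ≤ α' →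
        rep (T ((r : ℝ) : UnitAddCircle)) ≤ rep (T ((s : ℝ) : UnitAddCircle))) ∧
    (∀ r ∈ Xr, ∀ s ∈ Xr, β' ≤ r → r ≤ s → s ≤ β →
        rep (T ((r : ℝ) : UnitAddCircle)) ≤ rep (T ((s : ℝ) : UnitAddCircle))) ∧
    (∀ r ∈ Xr, α ≤ r → r ≤ α' → r < rep (T ((r : ℝ) : UnitAddCircle))) ∧
    (∀ r ∈ Xr, β' ≤ r → r ≤ β → rep (T ((r : ℝ) : UnitAddCircle)) < r) := by
  change Xr = liftSet X at hXr
  subst hXr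
  have hK := isRotationalLift_of_isRotational hfib hrot hinf h0
  have hcpt := isCompact_liftSet hrot.1 h0
  have hαK : IsLeast (liftSet X) α := hα ▸ hcpt.isLeast_sInf hK.infinite.nonempty
  have hβK : IsGreatest (liftSet X) β := hβ ▸ hcpt.isGreatest_sSup hK.infinite.nonempty
  have hfiber {y : ℝ} (hy : y ∈ liftSet X) : {r ∈ liftSet X | T r = y}.Nonempty := by
    obtain ⟨x, hx, hxy⟩ := hrot.surjOn hT hinf.nontrivial hy.2
    exact ⟨rep x, ⟨rep_mem_Ico x, by rwa [coe_rep]⟩, by rwa [coe_rep]⟩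
  obtain ⟨hα'K, hTα'⟩ : α' ∈ liftSet X ∧ T α' = β :=
    hα' ▸ (hfiber hβK.1).csSup_mem (finite_fiber_liftSet hfib X β)
  obtain ⟨hβ'K, hTβ'⟩ : β' ∈ liftSet X ∧ T β' = α :=
    hβ' ▸ (hfiber hαK.1).csInf_mem (finite_fiber_liftSet hfib X α)
  have hfα' : rep (T α') = β := by rw [hTα', rep_coe_of_mem hβK.1.1]
  have hfβ' : rep (T β') = α := by rw [hTβ', rep_coe_of_mem hαK.1.1]
  refine ⟨fun r hr s hs _ hrs hsα' => ?_, fun r hr s hs hβ'r hrs _ => ?_,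
    fun r hr _ hrα' => hK.lt_apply_of_le_of_apply_eq_max hβK hα'K hfα' hr hrα',
    fun r hr hβ'r _ => hK.apply_lt_of_le_of_apply_eq_min hαK hβ'K hfβ' hr hβ'r⟩
  · exact hK.monotoneOn_of_apply_eq_max hβK hα'K hfα' ⟨hr, hrs.trans hsα'⟩ ⟨hs, hsα'⟩ hrs
  · exact hK.monotoneOn_of_apply_eq_min hαK hβ'K hfβ' ⟨hr, hβ'r⟩ ⟨hs, hβ'r.trans hrs⟩ hrs

theorem monotone_on_edges
    (T : UnitAddCircle → UnitAddCircle) (hT : Continuous T)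
    (hfib : ∀ y : UnitAddCircle, (T ⁻¹' {y}).Finite)
    (X : Set UnitAddCircle) (hrot : IsRotational T X)
    (hinf : X.Infinite) (hproper : X ≠ Set.univ)
    (h0 : (0 : UnitAddCircle) ∉ X)
    (Xr : Set ℝ)
    (hXr : Xr = {r : ℝ | r ∈ Set.Ico (0:ℝ) 1 ∧ ((r : ℝ) : UnitAddCircle) ∈ X})
    (α β : ℝ) (hα : α = sInf Xr) (hβ : β = sSup Xr)
    (α' β' : ℝ)
    (hα' : α' = sSup {r ∈ Xr | T ((r : ℝ) : UnitAddCircle) = ((β : ℝ) : UnitAddCircle)})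
    (hβ' : β' = sInf {r ∈ Xr | T ((r : ℝ) : UnitAddCircle) = ((α : ℝ) : UnitAddCircle)}) :
    (∀ r ∈ Xr, ∀ s ∈ Xr, α ≤ r → r ≤ s → s ≤ α' →
        rep (T ((r : ℝ) : UnitAddCircle)) ≤ rep (T ((s : ℝ) : UnitAddCircle))) ∧
    (∀ r ∈ Xr, ∀ s ∈ Xr, β' ≤ r → r ≤ s → s ≤ β →
        rep (T ((r : ℝ) : UnitAddCircle)) ≤ rep (T ((s : ℝ) : UnitAddCircle))) ∧
    (∀ r ∈ Xr, α ≤ r → r ≤ α' → r < rep (T ((r : ℝ) : UnitAddCircle))) ∧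
    (∀ r ∈ Xr, β' ≤ r → r ≤ β → rep (T ((r : ℝ) : UnitAddCircle)) < r) :=
  monotone_on_edges_general T hT hfib X hrot hinf h0 Xr hXr α β hα hβ α' β' hα' hβ'
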